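/- arXiv:2410.01991 — 3 statements merged into one kernel-verified Lean document; each statement's English description precedes it below -/
import Mathlib

section
/- Let F be a field and n ≥ 1. For any upper triangular unipotent matrices n₁, n₂ ∈ GL_n(F) and any g ∈ M_n(F), the determinant of the minor of n₁ g n₂ with rows indexed by {n+1-k, ..., n} and columns indexed by {1, ..., k} equals the determinant of the corresponding minor of g, for every 1 ≤ k ≤ n. -/
/-- The determinant of the minor with rows `{n+1-k, ..., n}` and columns `{1, ..., k}`
(1-based), i.e. the bottom-left `k × k` anti-corner minor. -/
def alphaMinor (F : Type*) [Field F] (n k : ℕ) (hk : k ≤ n)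
    (g : Matrix (Fin n) (Fin n) F) : F :=
  (g.submatrix (fun i : Fin k => (⟨n - k + i.1, by have := i.2; omega⟩ : Fin n))
    (fun j : Fin k => (⟨j.1, by have := j.2; omega⟩ : Fin n))).det

private lemma sum_range_eq' {F : Type*} [AddCommMonoid F] {n k : ℕ} (r : Fin k → Fin n)
    (hr : Function.Injective r) (f : Fin n → F) (hf : ∀ a, (∀ i, r i ≠ a) → f a = 0) :
    ∑ a, f a = ∑ i, f (r i) := by
  rw [← Finset.sum_image (fun i _ j _ h => hr h)]
  symm
  apply Finset.sum_subset (Finset.subset_univ _)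
  intro a _ ha
  exact hf a (fun i hi => ha (Finset.mem_image.mpr ⟨i, Finset.mem_univ i, hi⟩))

theorem stmt0 {F : Type*} [Field F] (n : ℕ) (hn : 1 ≤ n)
    (n₁ n₂ g : Matrix (Fin n) (Fin n) F)
    (h1u : ∀ i j : Fin n, j < i → n₁ i j = 0) (h1d : ∀ i : Fin n, n₁ i i = 1)
    (h2u : ∀ i j : Fin n, j < i → n₂ i j = 0) (h2d : ∀ i : Fin n, n₂ i i = 1)
    (k : ℕ) (hk1 : 1 ≤ k) (hkn : k ≤ n) :
    alphaMinor F n k hkn (n₁ * g * n₂) = alphaMinor F n k hkn g := by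
  set r : Fin k → Fin n := fun i => (⟨n - k + i.1, by have := i.2; omega⟩ : Fin n) with hr
  set c : Fin k → Fin n := fun j => (⟨j.1, by have := j.2; omega⟩ : Fin n) with hc
  have hrinj : Function.Injective r := by
    intro a b h
    have : n - k + a.1 = n - k + b.1 := congrArg Fin.val h
    exact Fin.ext (by omega)
  have hcinj : Function.Injective c := by
    intro a b h
    have h' := congrArg Fin.val h
    exact Fin.ext h'
  have key : (n₁ * g * n₂).submatrix r c =
      n₁.submatrix r r * g.submatrix r c * n₂.submatrix c c := by
    ext i j
    simp only [Matrix.submatrix_apply, Matrix.mul_apply]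
    rw [sum_range_eq' c hcinj (fun b => (∑ a, n₁ (r i) a * g a b) * n₂ b (c j)) ?_]
    · apply Finset.sum_congr rfl
      intro b _
      congr 1
      rw [sum_range_eq' r hrinj (fun a => n₁ (r i) a * g a (c b)) ?_]
      intro a ha
      have hlt : a.1 < n - k := by
        by_contra h
        push_neg at h
        have hak : a.1 - (n - k) < k := by have := a.2; omega
        exact ha ⟨a.1 - (n - k), hak⟩ (Fin.ext (by simp [hr]; omega))
      have : a < r i := by
        have : (r i).1 = n - k + i.1 := rfl
        exact Fin.lt_def.mpr (by omega)
      simp only [h1u _ _ this, zero_mul]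
    · intro b hb
      have hge : k ≤ b.1 := by
        by_contra h
        push_neg at h
        exact hb ⟨b.1, h⟩ (Fin.ext rfl)
      have : c j < b := Fin.lt_def.mpr (by have := j.2; simp [hc]; omega)
      simp only [h2u _ _ this, mul_zero]
  unfold alphaMinor
  rw [key, Matrix.det_mul, Matrix.det_mul]
  have hA : (n₁.submatrix r r).det = 1 := by
    rw [Matrix.det_of_upperTriangular]
    · simp only [Matrix.submatrix_apply]
      simp [h1d]
    · intro i j hij
      have hji : j.1 < i.1 := hij
      have : r j < r i := Fin.lt_def.mpr (by simp [hr]; omega)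
      exact h1u _ _ this
  have hB : (n₂.submatrix c c).det = 1 := by
    rw [Matrix.det_of_upperTriangular]
    · simp only [Matrix.submatrix_apply]
      simp [h2d]
    · intro i j hij
      have hji : j.1 < i.1 := hij
      have : c j < c i := Fin.lt_def.mpr (by simp [hc]; omega)
      exact h2u _ _ this
  rw [hA, hB, one_mul, mul_one]
end

section
/- Let F be a field and n ≥ 1. Among all n×n permutation matrices w, the only one for which α_k(w) ≠ 0 for all 1 ≤ k ≤ n is the antidiagonal permutation matrix w₀ with (w₀)_{i,j} = 1 iff i + j = n + 1. -/
/-- The permutation matrix of `σ`: entry `(i,j)` is `1` iff `σ j = i`. -/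
def permMat (F : Type*) [Field F] (n : ℕ) (σ : Equiv.Perm (Fin n)) :
    Matrix (Fin n) (Fin n) F :=
  Matrix.of fun i j => if σ j = i then (1 : F) else 0

lemma permMat_eq (F : Type*) [Field F] (n : ℕ) (σ : Equiv.Perm (Fin n)) :
    permMat F n σ = (σ⁻¹).permMatrix F := by
  ext i j
  simp only [permMat, Equiv.Perm.permMatrix, PEquiv.toMatrix_apply, Equiv.toPEquiv_apply,
    Matrix.of_apply, Option.mem_def, Option.some.injEq]
  by_cases hc : σ j = i
  · subst hc
    simp
  · rw [if_neg hc, if_neg]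
    intro he
    exact hc (by rw [← he]; simp)

lemma det_permMat_ne_zero (F : Type*) [Field F] (n : ℕ) (σ : Equiv.Perm (Fin n)) :
    (permMat F n σ).det ≠ 0 := by
  rw [permMat_eq, Matrix.det_permutation]
  rcases Int.units_eq_one_or (Equiv.Perm.sign σ⁻¹) with h | h <;> simp [h]

theorem stmt2 {F : Type*} [Field F] (n : ℕ) (hn : 1 ≤ n) (σ : Equiv.Perm (Fin n)) :
    (∀ k (hk1 : 1 ≤ k) (hkn : k ≤ n), alphaMinor F n k hkn (permMat F n σ) ≠ 0) ↔
      σ = Fin.revPerm := by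
  constructor
  · intro h
    have key : ∀ j : Fin n, n - (j.val + 1) ≤ (σ j).val := by
      intro j
      by_contra hc
      push_neg at hc
      have hk : j.val + 1 ≤ n := j.2
      apply h (j.val + 1) (Nat.le_add_left 1 _) hk
      unfold alphaMinor
      apply Matrix.det_eq_zero_of_column_eq_zero ⟨j.val, Nat.lt_succ_self _⟩
      intro i
      simp only [Matrix.submatrix_apply, permMat, Matrix.of_apply]
      rw [if_neg]
      intro he
      have := congrArg Fin.val he
      simp only [Fin.eta] at this
      omega
    have hs1 : ∑ j : Fin n, (σ j).val = ∑ j : Fin n, j.val := Equiv.sum_comp σ Fin.val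
    have hs2 : ∑ j : Fin n, (n - (j.val + 1)) = ∑ j : Fin n, j.val := by
      have := Equiv.sum_comp (Fin.revPerm (n := n)) Fin.val
      simpa [Fin.val_rev] using this
    have hsum : ∑ j : Fin n, (n - (j.val + 1)) = ∑ j : Fin n, (σ j).val := by
      rw [hs1, hs2]
    have heq := (Finset.sum_eq_sum_iff_of_le (fun i _ => key i)).mp hsum
    ext j
    have := heq j (Finset.mem_univ j)
    simp only [Fin.revPerm_apply, Fin.val_rev]
    omega
  · intro h k hk1 hkn
    subst h
    unfold alphaMinor
    have hsub : ((permMat F n Fin.revPerm).submatrix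
        (fun i : Fin k => (⟨n - k + i.1, by have := i.2; omega⟩ : Fin n))
        (fun j : Fin k => (⟨j.1, by have := j.2; omega⟩ : Fin n)))
        = permMat F k Fin.revPerm := by
      ext i j
      simp only [Matrix.submatrix_apply, permMat, Matrix.of_apply, Fin.revPerm_apply]
      have hiff : ((⟨j.1, by have := j.2; omega⟩ : Fin n).rev = ⟨n - k + i.1, by have := i.2; omega⟩)
          ↔ (j.rev = i) := by
        rw [Fin.ext_iff, Fin.ext_iff]
        simp only [Fin.val_rev]
        have := i.2; have := j.2
        omega
      simp [hiff]
    rw [hsub]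
    exact det_permMat_ne_zero F k Fin.revPerm
end

section
/- Let n = m + 2r with r ≥ 0 and consider V = ℂⁿ ⊗ ℂᵐ ⊕ ℂⁿ ⊗ ℂᵐ with the symplectic form of the Rankin–Selberg construction. Let r' = m + r. Define Y₋ = span of {(e_i ⊗ e_j, 0), (0, e_i ⊗ e_j) : i + j > r' + 1} together with {(e_{j+r} ⊗ e_{m−j+1}, 0) : 1 ≤ j ≤ m}. Then Y₋ is a Lagrangian subspace: it is isotropic and has dimension nm (half of dim V = 2nm). -/
open scoped TensorProduct BigOperators

/-- The `k × k` antidiagonal matrix `J_k` with `(J_k)_{i, k+1−i} = (−1)^{i−1}` (1-based). -/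
noncomputable def Jmat (k : ℕ) : Matrix (Fin k) (Fin k) ℂ :=
  Matrix.of fun i j => if (i : ℕ) + (j : ℕ) = k - 1 then (-1 : ℂ) ^ (i : ℕ) else 0

/-- The pairing `(u, x) ↦ ᵗu J_k⁻¹ x` on `ℂ^k`. -/
noncomputable def pairK (k : ℕ) : (Fin k → ℂ) →ₗ[ℂ] (Fin k → ℂ) →ₗ[ℂ] ℂ :=
  Matrix.toLinearMap₂' ℂ (Jmat k)⁻¹

/-- The induced pairing on `ℂ^n ⊗ ℂ^m`. -/
noncomputable def QQ (n m : ℕ) :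
    LinearMap.BilinForm ℂ ((Fin n → ℂ) ⊗[ℂ] (Fin m → ℂ)) :=
  LinearMap.BilinForm.tmul (pairK n) (pairK m)

/-- The Rankin–Selberg symplectic form on `ℂⁿ ⊗ ℂᵐ ⊕ ℂⁿ ⊗ ℂᵐ`. -/
noncomputable def RSform (n m : ℕ)
    (a b : ((Fin n → ℂ) ⊗[ℂ] (Fin m → ℂ)) × ((Fin n → ℂ) ⊗[ℂ] (Fin m → ℂ))) : ℂ :=
  QQ n m a.1 b.2 - QQ n m b.1 a.2

/-- Standard basis vector `e_i` of `ℂ^k`. -/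
noncomputable def stdVec (k : ℕ) (i : Fin k) : Fin k → ℂ := Pi.single i 1

/-- The generating set of the Lagrangian `Y₋` (with `n = m + 2r`, `r' = m + r`,
all in 0-based indexing: `i + j > r' + 1` 1-based becomes `i + j ≥ m + r`). -/
def Yset (m r : ℕ) :
    Set (((Fin (m + 2 * r) → ℂ) ⊗[ℂ] (Fin m → ℂ)) ×
      ((Fin (m + 2 * r) → ℂ) ⊗[ℂ] (Fin m → ℂ))) :=
  {p | (∃ (i : Fin (m + 2 * r)) (j : Fin m), (i : ℕ) + (j : ℕ) ≥ m + r ∧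
          (p = (stdVec (m + 2 * r) i ⊗ₜ[ℂ] stdVec m j, 0) ∨
            p = (0, stdVec (m + 2 * r) i ⊗ₜ[ℂ] stdVec m j))) ∨
       (∃ j : Fin m,
          p = (stdVec (m + 2 * r) (⟨(j : ℕ) + r, by have := j.2; omega⟩) ⊗ₜ[ℂ]
            stdVec m (⟨m - 1 - (j : ℕ), by have := j.2; omega⟩), 0))}

/-!
Since `J_k⁻¹ = ±J_k` is antidiagonal, `Q(e_i ⊗ e_j, e_{i'} ⊗ e_{j'})` (0-based indices) vanishes
unless `i + i' = n - 1` and `j + j' = m - 1`. The extra vectors `(e_{j+r} ⊗ e_{m-1-j}, 0)` fill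
exactly the antidiagonal `i + j = m + r - 1`, so `Y₋` is spanned by the basis vectors
`(e_i ⊗ e_j, 0)` with `i + j + 1 ≥ m + r` and `(0, e_i ⊗ e_j)` with `i + j ≥ m + r`. A nonzero
pairing between the two kinds would need index sums adding up to `n + m - 2 = 2(m + r) - 2`, which
is too small, so `Y₋` is isotropic. The reflection `(i, j) ↦ (n - 1 - i, m - 1 - j)` maps the
second index set onto the complement of the first, so together they have `nm` elements.
-/

lemma Jmat_mul_self (k : ℕ) : Jmat k * Jmat k = (-1 : ℂ) ^ (k - 1) • 1 := by
  ext i j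
  have hi := i.2
  have hj := j.2
  rw [Matrix.mul_apply, Finset.sum_eq_single (⟨k - 1 - (i : ℕ), by omega⟩ : Fin k)]
  · simp only [Jmat, Matrix.of_apply, Matrix.smul_apply, Matrix.one_apply]
    by_cases h : i = j
    · subst h
      rw [if_pos (by omega), if_pos (by omega), if_pos rfl, ← pow_add, smul_eq_mul, mul_one]
      congr 1
      omega
    · rw [if_neg h, smul_zero]
      by_cases h2 : (i : ℕ) + (k - 1 - (i : ℕ)) = k - 1
      · rw [if_pos h2, if_neg, mul_zero]
        intro hc
        exact h (Fin.ext (by omega))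
      · rw [if_neg h2, zero_mul]
  · intro b _ hb
    simp only [Jmat, Matrix.of_apply]
    rw [if_neg, zero_mul]
    intro hc
    have : (b : ℕ) = k - 1 - (i : ℕ) := by omega
    exact hb (Fin.ext (by simpa using this))
  · simp

lemma Jmat_inv (k : ℕ) : (Jmat k)⁻¹ = (-1 : ℂ) ^ (k - 1) • Jmat k := by
  refine Matrix.inv_eq_right_inv ?_
  rw [Matrix.mul_smul, Jmat_mul_self, smul_smul, ← pow_add, ← two_mul, pow_mul]
  simp

lemma pairK_stdVec_eq_zero {k : ℕ} {i j : Fin k} (h : (i : ℕ) + j ≠ k - 1) :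
    pairK k (stdVec k i) (stdVec k j) = 0 := by
  rw [pairK, Jmat_inv]
  simp [stdVec, Matrix.toLinearMap₂'_apply', Jmat, h]

lemma QQ_stdVec_tmul_eq_zero {n m : ℕ} {i i' : Fin n} {j j' : Fin m}
    (h : (i : ℕ) + i' ≠ n - 1 ∨ (j : ℕ) + j' ≠ m - 1) :
    QQ n m (stdVec n i ⊗ₜ stdVec m j) (stdVec n i' ⊗ₜ stdVec m j') = 0 := by
  rcases h with h | h <;> simp [QQ, pairK_stdVec_eq_zero h]

theorem LinearMap.eq_zero_of_mem_span₂ {R M N P : Type*} [CommSemiring R] [AddCommMonoid M]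
    [AddCommMonoid N] [AddCommMonoid P] [Module R M] [Module R N] [Module R P]
    {B : M →ₗ[R] N →ₗ[R] P} {s : Set M} {t : Set N} (h : ∀ x ∈ s, ∀ y ∈ t, B x y = 0)
    {x : M} (hx : x ∈ Submodule.span R s) {y : N} (hy : y ∈ Submodule.span R t) : B x y = 0 := by
  have hy' : ∀ x ∈ s, B x y = 0 := fun x hx =>
    LinearMap.eqOn_span (f := B x) (g := 0) (fun y hy => h x hx y hy) hy
  exact LinearMap.eqOn_span (f := B.flip y) (g := 0) hy' hx

noncomputable def crossForm (n m : ℕ) :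
    LinearMap.BilinForm ℂ (((Fin n → ℂ) ⊗[ℂ] (Fin m → ℂ)) × ((Fin n → ℂ) ⊗[ℂ] (Fin m → ℂ))) :=
  (QQ n m).compl₁₂ (LinearMap.fst ℂ _ _) (LinearMap.snd ℂ _ _)

lemma RSform_eq_crossForm_sub_flip (n m : ℕ) (x y) :
    RSform n m x y = (crossForm n m - (crossForm n m).flip) x y := rfl

noncomputable def rsBasis (n m : ℕ) : Module.Basis ((Fin n × Fin m) ⊕ (Fin n × Fin m)) ℂ
    (((Fin n → ℂ) ⊗[ℂ] (Fin m → ℂ)) × ((Fin n → ℂ) ⊗[ℂ] (Fin m → ℂ))) :=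
  let b := (Pi.basisFun ℂ (Fin n)).tensorProduct (Pi.basisFun ℂ (Fin m))
  b.prod b

lemma rsBasis_inl {n m : ℕ} (i : Fin n) (j : Fin m) :
    rsBasis n m (.inl (i, j)) = (stdVec n i ⊗ₜ stdVec m j, 0) := by
  simp [rsBasis, Module.Basis.prod_apply, stdVec]

lemma rsBasis_inr {n m : ℕ} (i : Fin n) (j : Fin m) :
    rsBasis n m (.inr (i, j)) = (0, stdVec n i ⊗ₜ stdVec m j) := by
  simp [rsBasis, Module.Basis.prod_apply, stdVec]

theorem Module.Basis.finrank_span_image_finset {ι K V : Type*} [DivisionRing K] [AddCommGroup V]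
    [Module K V] (b : Module.Basis ι K V) (s : Finset ι) :
    Module.finrank K (Submodule.span K (b '' s)) = s.card := by
  rw [Set.image_eq_range]
  exact (finrank_span_eq_card (b.linearIndependent.comp _ Subtype.val_injective)).trans (by simp)

def lagrangianIndex (m r : ℕ) : Finset ((Fin (m + 2 * r) × Fin m) ⊕ (Fin (m + 2 * r) × Fin m)) :=
  (Finset.univ.filter fun p => m + r ≤ (p.1 : ℕ) + p.2 + 1).disjSum
    (Finset.univ.filter fun p => m + r ≤ (p.1 : ℕ) + p.2)

lemma Yset_eq_image (m r : ℕ) : Yset m r = rsBasis _ m '' lagrangianIndex m r := by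
  ext p
  simp only [Yset, lagrangianIndex, Set.mem_ofPred_eq, Set.mem_image, Finset.mem_coe,
    Sum.exists, Finset.inl_mem_disjSum, Finset.inr_mem_disjSum, Finset.mem_filter,
    Finset.mem_univ, true_and, Prod.exists, rsBasis_inl, rsBasis_inr]
  constructor
  · rintro (⟨i, j, hij, rfl | rfl⟩ | ⟨j, rfl⟩)
    · exact Or.inl ⟨i, j, by omega, rfl⟩
    · exact Or.inr ⟨i, j, hij, rfl⟩
    · exact Or.inl ⟨_, _, by simp; omega, rfl⟩
  · rintro (⟨i, j, hij, rfl⟩ | ⟨i, j, hij, rfl⟩)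
    · by_cases h : m + r ≤ i + j
      · exact Or.inl ⟨i, j, h, Or.inl rfl⟩
      · refine Or.inr ⟨⟨i - r, by omega⟩, ?_⟩
        congr 3 <;> ext <;> simp <;> omega
    · exact Or.inl ⟨i, j, hij, Or.inr rfl⟩

lemma crossForm_rsBasis_eq_zero {m r : ℕ} {x y} (hx : x ∈ lagrangianIndex m r)
    (hy : y ∈ lagrangianIndex m r) : crossForm _ m (rsBasis _ m x) (rsBasis _ m y) = 0 := by
  rcases x with ⟨i, j⟩ | ⟨i, j⟩ <;> rcases y with ⟨i', j'⟩ | ⟨i', j'⟩ <;>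
    simp only [crossForm, LinearMap.compl₁₂_apply, LinearMap.fst_apply, LinearMap.snd_apply,
      rsBasis_inl, rsBasis_inr, map_zero, LinearMap.zero_apply]
  simp only [lagrangianIndex, Finset.inl_mem_disjSum, Finset.inr_mem_disjSum, Finset.mem_filter,
    Finset.mem_univ, true_and] at hx hy
  exact QQ_stdVec_tmul_eq_zero (by omega)

lemma card_filter_le_add_add_card_filter_le {a b s t : ℕ} (hst : s + t = a + b) :
    (Finset.univ.filter fun p : Fin a × Fin b => s ≤ (p.1 : ℕ) + p.2 + 1).card +
      (Finset.univ.filter fun p : Fin a × Fin b => t ≤ (p.1 : ℕ) + p.2).card = a * b := by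
  have reflect : (Finset.univ.filter fun p : Fin a × Fin b => t ≤ (p.1 : ℕ) + p.2).card =
      (Finset.univ.filter fun p : Fin a × Fin b => ¬ s ≤ (p.1 : ℕ) + p.2 + 1).card := by
    refine Finset.card_nbij' (fun p => (p.1.rev, p.2.rev)) (fun p => (p.1.rev, p.2.rev))
      ?_ ?_ (fun _ _ => by simp) (fun _ _ => by simp)
    all_goals
      rintro ⟨i, j⟩
      have := i.2
      have := j.2
      simp only [Finset.coe_filter, Finset.mem_univ, true_and, Set.mem_ofPred_eq, Fin.val_rev]
      omega
  rw [reflect, Finset.card_filter_add_card_filter_not, Finset.card_univ,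
    Fintype.card_prod, Fintype.card_fin, Fintype.card_fin]

lemma card_lagrangianIndex (m r : ℕ) : (lagrangianIndex m r).card = (m + 2 * r) * m := by
  rw [lagrangianIndex, Finset.card_disjSum]
  exact card_filter_le_add_add_card_filter_le (by ring)

theorem stmt16_general (m r : ℕ) :
    (∀ x ∈ Submodule.span ℂ (Yset m r), ∀ y ∈ Submodule.span ℂ (Yset m r),
        RSform (m + 2 * r) m x y = 0) ∧
      Module.finrank ℂ (Submodule.span ℂ (Yset m r)) = (m + 2 * r) * m := by
  rw [Yset_eq_image]
  refine ⟨fun x hx y hy => ?_, ?_⟩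
  · rw [RSform_eq_crossForm_sub_flip]
    refine LinearMap.eq_zero_of_mem_span₂ ?_ hx hy
    rintro _ ⟨a, ha, rfl⟩ _ ⟨b, hb, rfl⟩
    simp [crossForm_rsBasis_eq_zero ha hb, crossForm_rsBasis_eq_zero hb ha]
  · rw [Module.Basis.finrank_span_image_finset, card_lagrangianIndex]

theorem stmt16 (m r : ℕ) (hm : 1 ≤ m) :
    (∀ x ∈ Submodule.span ℂ (Yset m r), ∀ y ∈ Submodule.span ℂ (Yset m r),
        RSform (m + 2 * r) m x y = 0) ∧
      Module.finrank ℂ (Submodule.span ℂ (Yset m r)) = (m + 2 * r) * m :=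
  stmt16_general m r
end
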